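/- arXiv:2107.05544 — 3 statements merged into one kernel-verified Lean document; each statement's English description precedes it below -/
import Mathlib

section
/- If ℓ : ℝ^{D_u} × U → ℝ satisfies the optimal stationarity condition (for all u ∈ U and q ∈ ℝ^{D_u}, ∇_q ℓ(q,u) exists and ∇_q ℓ(q,u) = 0 implies ℓ(q,u) ≤ ℓ(q',u) for all q'), and θ is a stationary point of L(θ) = (1/N) Σ_{i=1}^N ℓ(û_θ(x_i), u_i) at which the Jacobian ∂û_X(θ)/∂θ has full row rank N·D_u, then θ is a global minimum of L. -/
/-! Stationarity of `L` at `θ` says `∑ᵢ dℓᵢ ∘ dûᵢ = 0`, where `dℓᵢ` is the derivative of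
`ℓ(·, uᵢ)` at `û_θ(xᵢ)` and `dûᵢ` that of `θ ↦ û_θ(xᵢ)`. The stacked Jacobian `(dûᵢ)ᵢ` is onto,
so every `dℓᵢ` vanishes; by optimal stationarity each summand of `L` is then at its global
minimum. -/

theorem LinearMap.surjective_of_rank_eq_finrank {K V W : Type*} [DivisionRing K]
    [AddCommGroup V] [Module K V] [AddCommGroup W] [Module K W] [FiniteDimensional K W]
    (f : V →ₗ[K] W) (h : f.rank = Module.finrank K W) : Function.Surjective f :=
  LinearMap.range_eq_top.1 (Submodule.eq_top_of_finrank_eq (Module.finrank_eq_of_rank_eq h))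

theorem ContinuousLinearMap.eq_zero_of_sum_comp_eq_zero_of_surjective_pi
    {R M P ι : Type*} {φ : ι → Type*} [Semiring R] [Fintype ι]
    [TopologicalSpace M] [AddCommMonoid M] [Module R M]
    [TopologicalSpace P] [AddCommMonoid P] [Module R P] [ContinuousAdd P]
    [∀ i, TopologicalSpace (φ i)] [∀ i, AddCommMonoid (φ i)] [∀ i, Module R (φ i)]
    {D : ∀ i, M →L[R] φ i} {G : ∀ i, φ i →L[R] P}
    (hD : Function.Surjective (ContinuousLinearMap.pi D)) (hGD : ∑ i, (G i).comp (D i) = 0)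
    (i : ι) : G i = 0 := by
  classical
  ext y
  obtain ⟨w, hw⟩ := hD (Pi.single i y)
  have hDw : ∀ j, D j w = Pi.single i y j := fun j => congrFun hw j
  have hGDw := congrArg (fun T => T w) hGD
  simp only [_root_.sum_apply, ContinuousLinearMap.comp_apply, hDw,
    _root_.zero_apply] at hGDw
  rwa [Finset.sum_eq_single i (fun j _ hj => by simp [hj]) (by simp), Pi.single_eq_same] at hGDw

theorem gradient_eq_zero_iff {𝕜 F : Type*} [RCLike 𝕜] [NormedAddCommGroup F]
    [InnerProductSpace 𝕜 F] [CompleteSpace F] {f : F → 𝕜} {x : F} :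
    gradient f x = 0 ↔ fderiv 𝕜 f x = 0 := by
  simp [gradient]

theorem optimal_stationarity_implies_global_min_general
    {Du N Dθ : ℕ}
    (U : Set (EuclideanSpace ℝ (Fin Du)))
    (ℓ : EuclideanSpace ℝ (Fin Du) → EuclideanSpace ℝ (Fin Du) → ℝ)
    (u : Fin N → EuclideanSpace ℝ (Fin Du)) (hu : ∀ i, u i ∈ U)
    (model : EuclideanSpace ℝ (Fin Dθ) → Fin N → EuclideanSpace ℝ (Fin Du))
    (hmodel : ∀ i, Differentiable ℝ fun θ => model θ i)
    (hosc : ∀ v ∈ U, ∀ q : EuclideanSpace ℝ (Fin Du),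
      DifferentiableAt ℝ (fun p => ℓ p v) q ∧
        (gradient (fun p => ℓ p v) q = 0 → ∀ q', ℓ q v ≤ ℓ q' v))
    (L : EuclideanSpace ℝ (Fin Dθ) → ℝ)
    (hL : L = fun θ => (1 / (N : ℝ)) * ∑ i, ℓ (model θ i) (u i))
    (θ : EuclideanSpace ℝ (Fin Dθ))
    (hstat : gradient L θ = 0)
    (hrank : LinearMap.rank
        (fderiv ℝ (fun θ' => (fun i => model θ' i)) θ).toLinearMap
        = ((N * Du : ℕ) : Cardinal)) :
    ∀ θ', L θ ≤ L θ' := by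
  have hD i : HasFDerivAt (fun θ => model θ i) (fderiv ℝ (fun θ => model θ i) θ) θ :=
    (hmodel i θ).hasFDerivAt
  have hG i : HasFDerivAt (fun p => ℓ p (u i))
      (fderiv ℝ (fun p => ℓ p (u i)) (model θ i)) (model θ i) :=
    (hosc (u i) (hu i) _).1.hasFDerivAt
  have hLderiv : HasFDerivAt L ((1 / (N : ℝ)) • ∑ i,
      (fderiv ℝ (fun p => ℓ p (u i)) (model θ i)).comp (fderiv ℝ (fun θ => model θ i) θ)) θ := by
    subst hL
    exact (HasFDerivAt.fun_sum fun i _ => (hG i).comp θ (hD i)).const_mul _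
  have hJ : Function.Surjective
      (ContinuousLinearMap.pi fun i => fderiv ℝ (fun θ => model θ i) θ) := by
    rw [← (hasFDerivAt_pi.2 hD).fderiv]
    refine LinearMap.surjective_of_rank_eq_finrank _ (hrank.trans ?_)
    simp [Module.finrank_pi_fintype, mul_comm]
  have hcrit i : fderiv ℝ (fun p => ℓ p (u i)) (model θ i) = 0 := by
    have hN : (N : ℝ) ≠ 0 := by exact_mod_cast i.pos.ne'
    refine ContinuousLinearMap.eq_zero_of_sum_comp_eq_zero_of_surjective_pi
      (G := fun i => fderiv ℝ (fun p => ℓ p (u i)) (model θ i)) hJ ?_ i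
    simpa [hN] using hLderiv.fderiv.symm.trans (gradient_eq_zero_iff.1 hstat)
  have hmin i q : ℓ (model θ i) (u i) ≤ ℓ q (u i) :=
    (hosc (u i) (hu i) _).2 (gradient_eq_zero_iff.2 (hcrit i)) q
  intro θ'
  subst hL
  exact mul_le_mul_of_nonneg_left (Finset.sum_le_sum fun i _ => hmin i _) (by positivity)

/-- If the loss `ℓ` satisfies the optimal stationarity condition, then any
stationary point `θ` of `L(θ) = (1/N) Σᵢ ℓ(û_θ(xᵢ), uᵢ)` at which the Jacobian of the stacked
output map has full row rank `N·Du` is a global minimum of `L`. -/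
theorem optimal_stationarity_implies_global_min
    {Du N Dθ : ℕ} (hN : 0 < N)
    (U : Set (EuclideanSpace ℝ (Fin Du)))
    (ℓ : EuclideanSpace ℝ (Fin Du) → EuclideanSpace ℝ (Fin Du) → ℝ)
    (u : Fin N → EuclideanSpace ℝ (Fin Du)) (hu : ∀ i, u i ∈ U)
    (model : EuclideanSpace ℝ (Fin Dθ) → Fin N → EuclideanSpace ℝ (Fin Du))
    (hmodel : ∀ i, Differentiable ℝ fun θ => model θ i)
    (hosc : ∀ v ∈ U, ∀ q : EuclideanSpace ℝ (Fin Du),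
      DifferentiableAt ℝ (fun p => ℓ p v) q ∧
        (gradient (fun p => ℓ p v) q = 0 → ∀ q', ℓ q v ≤ ℓ q' v))
    (L : EuclideanSpace ℝ (Fin Dθ) → ℝ)
    (hL : L = fun θ => (1 / (N : ℝ)) * ∑ i, ℓ (model θ i) (u i))
    (θ : EuclideanSpace ℝ (Fin Dθ))
    (hstat : gradient L θ = 0)
    (hrank : LinearMap.rank
        (fderiv ℝ (fun θ' => (fun i => model θ' i)) θ).toLinearMap
        = ((N * Du : ℕ) : Cardinal)) :
    ∀ θ', L θ ≤ L θ' :=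
  optimal_stationarity_implies_global_min_general U ℓ u hu model hmodel hosc L hL θ hstat hrank
end

section
/- Suppose ℓ fails the optimal stationarity condition: there exist u ∈ U and q ∈ ℝ^{D_u} with ∇_q ℓ(q,u) = 0 but ℓ(q,u) > ℓ(q',u) for some q'. If the model is fully expressive, i.e. {û_X(θ) : θ ∈ ℝ^{D_θ}} = ℝ^{N D_u}, then there exists a stationary point θ of L that is not a global minimum of L. -/
/-!
At a critical point `q` of `ℓ(·, u)`, any parameter `θ` that the model sends to `q` at every data
point is, by the chain rule, a critical point of `L`, and `L θ = ℓ(q, u)`. Full expressivity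
provides such a `θ`, and equally a `θ'` sent to `q'` everywhere, where `L θ' = ℓ(q', u) < L θ`.
-/

section

variable {F : Type*} [NormedAddCommGroup F] [InnerProductSpace ℝ F] [CompleteSpace F]

theorem DifferentiableAt.hasFDerivAt_zero_of_gradient_eq_zero {f : F → ℝ} {q : F}
    (hf : DifferentiableAt ℝ f q) (hq : gradient f q = 0) :
    HasFDerivAt f (0 : F →L[ℝ] ℝ) q := by
  have := hasGradientAt_iff_hasFDerivAt.mp hf.hasGradientAt
  rwa [hq, map_zero] at this

theorem gradient_eq_zero_of_hasFDerivAt_zero {f : F → ℝ} {q : F}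
    (hf : HasFDerivAt f (0 : F →L[ℝ] ℝ) q) : gradient f q = 0 := by
  rw [gradient, hf.fderiv, map_zero]

end

theorem hasFDerivAt_sum_comp_of_critical
    {E F ι : Type*} [NormedAddCommGroup E] [NormedSpace ℝ E]
    [NormedAddCommGroup F] [NormedSpace ℝ F]
    (s : Finset ι) (f : F → ℝ) (g : ι → E → F) {θ : E}
    (hg : ∀ i ∈ s, DifferentiableAt ℝ (g i) θ)
    (hf : ∀ i ∈ s, HasFDerivAt f (0 : F →L[ℝ] ℝ) (g i θ)) :
    HasFDerivAt (fun x => ∑ i ∈ s, f (g i x)) (0 : E →L[ℝ] ℝ) θ := by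
  have hterm : ∀ i ∈ s, HasFDerivAt (fun x => f (g i x)) (0 : E →L[ℝ] ℝ) θ := fun i hi => by
    simpa [Function.comp_def] using (hf i hi).comp θ (hg i hi).hasFDerivAt
  simpa using HasFDerivAt.fun_sum hterm

theorem one_div_mul_sum_const_fin {N : ℕ} (hN : 0 < N) (c : ℝ) :
    1 / (N : ℝ) * ∑ _i : Fin N, c = c := by
  rw [Finset.sum_const, Finset.card_univ, Fintype.card_fin, nsmul_eq_mul]
  field_simp

theorem failure_of_optimal_stationarity_gives_bad_stationary_point_general
    {Du N Dθ : ℕ} (hN : 0 < N)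
    (ℓ : EuclideanSpace ℝ (Fin Du) → EuclideanSpace ℝ (Fin Du) → ℝ)
    (hdiff : ∀ (v q : EuclideanSpace ℝ (Fin Du)), DifferentiableAt ℝ (fun p => ℓ p v) q)
    (u : EuclideanSpace ℝ (Fin Du))
    (hfail : ∃ q : EuclideanSpace ℝ (Fin Du),
      gradient (fun p => ℓ p u) q = 0 ∧ ∃ q', ℓ q' u < ℓ q u)
    (model : EuclideanSpace ℝ (Fin Dθ) → Fin N → EuclideanSpace ℝ (Fin Du))
    (hmodel : ∀ i, Differentiable ℝ fun θ => model θ i)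
    (hsurj : Function.Surjective (fun θ => (fun i => model θ i) :
      EuclideanSpace ℝ (Fin Dθ) → (Fin N → EuclideanSpace ℝ (Fin Du))))
    (L : EuclideanSpace ℝ (Fin Dθ) → ℝ)
    (hL : L = fun θ => (1 / (N : ℝ)) * ∑ i, ℓ (model θ i) u) :
    ∃ θ, gradient L θ = 0 ∧ ∃ θ', L θ' < L θ := by
  obtain ⟨q, hq, q', hlt⟩ := hfail
  obtain ⟨θ, hθ⟩ := hsurj fun _ => q
  obtain ⟨θ', hθ'⟩ := hsurj fun _ => q'
  have hθq : ∀ i, model θ i = q := congrFun hθ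
  have hθq' : ∀ i, model θ' i = q' := congrFun hθ'
  have hcrit : HasFDerivAt (fun p => ℓ p u) (0 : _ →L[ℝ] ℝ) q :=
    (hdiff u q).hasFDerivAt_zero_of_gradient_eq_zero hq
  have hsum : HasFDerivAt (fun θ => ∑ i, ℓ (model θ i) u) (0 : _ →L[ℝ] ℝ) θ :=
    hasFDerivAt_sum_comp_of_critical _ _ _ (fun i _ => hmodel i θ)
      (fun i _ => hθq i ▸ hcrit)
  refine ⟨θ, gradient_eq_zero_of_hasFDerivAt_zero ?_, θ', ?_⟩
  · subst hL
    simpa using hsum.const_mul (1 / (N : ℝ))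
  · simpa only [hL, hθq, hθq', one_div_mul_sum_const_fin hN] using hlt

/-- If the loss `ℓ` fails the optimal stationarity condition at some `u ∈ U`
(there is `q` with `∇_q ℓ(q,u) = 0` but `ℓ(q,u) > ℓ(q',u)` for some `q'`), and the model is
fully expressive (the stacked output map is surjective onto `ℝ^{N·Du}`), then the objective
`L(θ) = (1/N) Σᵢ ℓ(û_θ(xᵢ), u)` (data targets all equal to the witnessing `u`) has a
stationary point that is not a global minimum. -/
theorem failure_of_optimal_stationarity_gives_bad_stationary_point
    {Du N Dθ : ℕ} (hN : 0 < N)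
    (U : Set (EuclideanSpace ℝ (Fin Du)))
    (ℓ : EuclideanSpace ℝ (Fin Du) → EuclideanSpace ℝ (Fin Du) → ℝ)
    (hdiff : ∀ (v q : EuclideanSpace ℝ (Fin Du)), DifferentiableAt ℝ (fun p => ℓ p v) q)
    (u : EuclideanSpace ℝ (Fin Du)) (hu : u ∈ U)
    (hfail : ∃ q : EuclideanSpace ℝ (Fin Du),
      gradient (fun p => ℓ p u) q = 0 ∧ ∃ q', ℓ q' u < ℓ q u)
    (model : EuclideanSpace ℝ (Fin Dθ) → Fin N → EuclideanSpace ℝ (Fin Du))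
    (hmodel : ∀ i, Differentiable ℝ fun θ => model θ i)
    (hsurj : Function.Surjective (fun θ => (fun i => model θ i) :
      EuclideanSpace ℝ (Fin Dθ) → (Fin N → EuclideanSpace ℝ (Fin Du))))
    (L : EuclideanSpace ℝ (Fin Dθ) → ℝ)
    (hL : L = fun θ => (1 / (N : ℝ)) * ∑ i, ℓ (model θ i) u) :
    ∃ θ, gradient L θ = 0 ∧ ∃ θ', L θ' < L θ :=
  failure_of_optimal_stationarity_gives_bad_stationary_point_general hN ℓ hdiff u hfail model hmodel
    hsurj L hL
end

section
/- Under Assumption A with L-Lipschitz gradient and nonnegative L, if the learning rates satisfy ε^{(r)} → 0 and Σ_r ε^{(r)} = ∞, then the gradient descent-type iterates θ^{(r+1)} = θ^{(r)} − ε^{(r)} ḡ^{(r)} satisfy lim_{r→∞} ∇L(θ^{(r)}) = 0. -/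
/-! The descent lemma `f (x + v) ≤ f x + ⟪∇f x, v⟫ + (K / 2) ‖v‖²` shows that once
`Lc · cu · εᵣ ≤ cl`, each step lowers `L` by at least `(cl / 2) εᵣ ‖∇L(θᵣ)‖²`; as `L ≥ 0`,
the series `∑ εᵣ ‖∇L(θᵣ)‖²` converges. The Lipschitz bound on `∇L` gives
`bᵣ₊₁ ≤ bᵣ + C εᵣ bᵣ` for `bᵣ = ‖∇L(θᵣ)‖²`, and since these increments are summable, `bᵣ`
converges. Its limit is `0`: otherwise `εᵣ ≤ (2 / lim b) εᵣ bᵣ` eventually, and `∑ εᵣ < ∞`. -/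

open Filter Topology Set

section Descent

variable {E : Type*} [NormedAddCommGroup E] [InnerProductSpace ℝ E] [CompleteSpace E]
  {f : E → ℝ} {K : ℝ}

theorem hasDerivAt_comp_add_smul (hf : Differentiable ℝ f) (x v : E) (t : ℝ) :
    HasDerivAt (fun s : ℝ => f (x + s • v)) (inner ℝ (gradient f (x + t • v)) v) t := by
  have hline : HasDerivAt (fun s : ℝ => x + s • v) v t := by
    simpa using ((hasDerivAt_id t).smul_const v).const_add x
  simpa [Function.comp_def] using
    (hf (x + t • v)).hasGradientAt.hasFDerivAt.comp_hasDerivAt t hline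

theorem le_add_inner_gradient_add_sq (hf : Differentiable ℝ f)
    (hK : ∀ x y, ‖gradient f x - gradient f y‖ ≤ K * ‖x - y‖) (x v : E) :
    f (x + v) ≤ f x + inner ℝ (gradient f x) v + K / 2 * ‖v‖ ^ 2 := by
  set φ : ℝ → ℝ := fun t =>
    f (x + t • v) - t * inner ℝ (gradient f x) v - K / 2 * t ^ 2 * ‖v‖ ^ 2
  have hφ' : ∀ t, HasDerivAt φ
      (inner ℝ (gradient f (x + t • v) - gradient f x) v - K * t * ‖v‖ ^ 2) t := by
    intro t
    have hsq := ((hasDerivAt_pow 2 t).const_mul (K / 2)).mul_const (‖v‖ ^ 2)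
    refine (((hasDerivAt_comp_add_smul hf x v t).sub
      ((hasDerivAt_id t).mul_const (inner ℝ (gradient f x) v))).sub hsq).congr_deriv ?_
    rw [inner_sub_left]; ring
  have hφ'_nonpos : ∀ t ∈ interior (Ici (0 : ℝ)),
      inner ℝ (gradient f (x + t • v) - gradient f x) v - K * t * ‖v‖ ^ 2 ≤ 0 := by
    intro t ht
    rw [interior_Ici] at ht
    have : inner ℝ (gradient f (x + t • v) - gradient f x) v ≤ K * t * ‖v‖ ^ 2 :=
      calc inner ℝ (gradient f (x + t • v) - gradient f x) v
          ≤ ‖gradient f (x + t • v) - gradient f x‖ * ‖v‖ := real_inner_le_norm _ _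
        _ ≤ K * ‖t • v‖ * ‖v‖ := by
            gcongr; simpa using hK (x + t • v) x
        _ = K * t * ‖v‖ ^ 2 := by rw [norm_smul, Real.norm_of_nonneg (le_of_lt ht)]; ring
    linarith
  have hanti : AntitoneOn φ (Ici 0) :=
    antitoneOn_of_hasDerivWithinAt_nonpos (convex_Ici 0)
      (fun t _ => (hφ' t).continuousAt.continuousWithinAt)
      (fun t _ => (hφ' t).hasDerivWithinAt) hφ'_nonpos
  have h01 := hanti self_mem_Ici (mem_Ici.2 zero_le_one) zero_le_one
  simp only [φ, zero_smul, one_smul, add_zero, zero_mul, sub_zero, one_mul, one_pow,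
    ne_eq, OfNat.ofNat_ne_zero, not_false_eq_true, zero_pow, mul_zero] at h01
  linarith

theorem apply_sub_smul_le_sub (hf : Differentiable ℝ f) (hK₀ : 0 ≤ K)
    (hK : ∀ x y, ‖gradient f x - gradient f y‖ ≤ K * ‖x - y‖) {x d : E} {t c₁ c₂ : ℝ}
    (hdir : c₁ * ‖gradient f x‖ ^ 2 ≤ inner ℝ (gradient f x) d)
    (hd : ‖d‖ ^ 2 ≤ c₂ * ‖gradient f x‖ ^ 2) (ht : 0 ≤ t) (hsmall : K * c₂ * t ≤ c₁) :
    f (x - t • d) ≤ f x - c₁ / 2 * (t * ‖gradient f x‖ ^ 2) := by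
  have hdesc := le_add_inner_gradient_add_sq hf hK x (-(t • d))
  rw [← sub_eq_add_neg, inner_neg_right, real_inner_smul_right, norm_neg, norm_smul,
    Real.norm_of_nonneg ht, mul_pow] at hdesc
  have htg : 0 ≤ t * ‖gradient f x‖ ^ 2 := by positivity
  nlinarith [mul_le_mul_of_nonneg_left hdir ht,
    mul_le_mul_of_nonneg_left hd (mul_nonneg hK₀ (sq_nonneg t)),
    mul_le_mul_of_nonneg_left hsmall htg]

theorem norm_gradient_sub_smul_sq_le (hK₀ : 0 ≤ K)
    (hK : ∀ x y, ‖gradient f x - gradient f y‖ ≤ K * ‖x - y‖) {x d : E} {t T c : ℝ}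
    (hd : ‖d‖ ^ 2 ≤ c * ‖gradient f x‖ ^ 2) (ht : 0 ≤ t) (htT : t ≤ T) :
    ‖gradient f (x - t • d)‖ ^ 2 ≤
      ‖gradient f x‖ ^ 2 + K * (1 + c + K * T * c) * (t * ‖gradient f x‖ ^ 2) := by
  have hstep : ‖gradient f (x - t • d)‖ ≤ ‖gradient f x‖ + K * t * ‖d‖ := by
    have := hK (x - t • d) x
    rw [sub_sub_cancel_left, norm_neg, norm_smul, Real.norm_of_nonneg ht] at this
    linarith [norm_le_norm_add_norm_sub' (gradient f (x - t • d)) (gradient f x)]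
  have hKt : 0 ≤ K * t := mul_nonneg hK₀ ht
  have hcg : 0 ≤ c * ‖gradient f x‖ ^ 2 := (sq_nonneg _).trans hd
  -- `2ab ≤ a² + b²` on the cross term, then `‖d‖² ≤ c ‖∇f x‖²` and `t ≤ T`
  calc ‖gradient f (x - t • d)‖ ^ 2 ≤ (‖gradient f x‖ + K * t * ‖d‖) ^ 2 :=
        pow_le_pow_left₀ (norm_nonneg _) hstep 2
    _ ≤ ‖gradient f x‖ ^ 2 + K * t * (‖gradient f x‖ ^ 2 + ‖d‖ ^ 2)
          + (K * t) ^ 2 * ‖d‖ ^ 2 := by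
        nlinarith [mul_nonneg hKt (sq_nonneg (‖gradient f x‖ - ‖d‖))]
    _ ≤ ‖gradient f x‖ ^ 2 + K * (1 + c + K * T * c) * (t * ‖gradient f x‖ ^ 2) := by
        nlinarith [mul_le_mul_of_nonneg_left hd hKt,
          mul_le_mul_of_nonneg_left hd (sq_nonneg (K * t)),
          mul_le_mul_of_nonneg_left htT (mul_nonneg (mul_nonneg hKt hK₀) hcg)]

end Descent

section Sequences

theorem summable_of_eventually_add_le {f u : ℕ → ℝ} (hf : BddBelow (range f))
    (hu : ∀ n, 0 ≤ u n) (h : ∀ᶠ n in atTop, f (n + 1) + u n ≤ f n) : Summable u := by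
  obtain ⟨m, hm⟩ := hf
  obtain ⟨N, hN⟩ := eventually_atTop.1 h
  have htelescope : ∀ n, ∑ k ∈ Finset.range n, u (k + N) ≤ f N - f (n + N) := by
    intro n
    induction n with
    | zero => simp
    | succ n ih =>
      rw [Finset.sum_range_succ, add_right_comm]
      linarith [hN (n + N) (Nat.le_add_left N n)]
  refine (summable_nat_add_iff N).1
    (summable_of_sum_range_le (c := f N - m) (fun n => hu _) fun n => ?_)
  linarith [htelescope n, hm ⟨n + N, rfl⟩]

theorem exists_tendsto_of_le_add_of_summable {b w : ℕ → ℝ} (hb : BddBelow (range b))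
    (hw : Summable w) (h : ∀ n, b (n + 1) ≤ b n + w n) : ∃ ℓ, Tendsto b atTop (𝓝 ℓ) := by
  set c : ℕ → ℝ := fun n => b n - ∑ k ∈ Finset.range n, w k
  have hc_anti : Antitone c := antitone_nat_of_succ_le fun n => by
    simp only [c, Finset.sum_range_succ]; linarith [h n]
  have hc_bdd : BddBelow (range c) := by
    obtain ⟨m, hm⟩ := hb
    obtain ⟨S, hS⟩ := hw.hasSum.tendsto_sum_nat.bddAbove_range
    exact ⟨m - S, by rintro _ ⟨n, rfl⟩; linarith [hm ⟨n, rfl⟩, hS ⟨n, rfl⟩]⟩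
  refine ⟨_, ((tendsto_atTop_ciInf hc_anti hc_bdd).add hw.hasSum.tendsto_sum_nat).congr ?_⟩
  intro n; simp [c]

theorem nonpos_of_tendsto_of_summable_mul {b ε : ℕ → ℝ} {ℓ : ℝ} (hb : Tendsto b atTop (𝓝 ℓ))
    (hε : ∀ n, 0 ≤ ε n) (hε_div : ¬ Summable ε) (hsum : Summable fun n => ε n * b n) :
    ℓ ≤ 0 := by
  by_contra! hℓ
  refine hε_div ((hsum.mul_left (2 / ℓ)).of_norm_bounded_eventually_nat ?_)
  filter_upwards [hb.eventually (eventually_gt_nhds (half_lt_self hℓ))] with n hn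
  have := hε n
  calc ‖ε n‖ = 2 / ℓ * (ε n * (ℓ / 2)) := by rw [Real.norm_of_nonneg this]; field_simp
    _ ≤ 2 / ℓ * (ε n * b n) := by gcongr

theorem tendsto_zero_of_le_add_mul_of_summable_mul {b ε : ℕ → ℝ} {C : ℝ} (hb : ∀ n, 0 ≤ b n)
    (hε : ∀ n, 0 ≤ ε n) (hε_div : ¬ Summable ε) (hsum : Summable fun n => ε n * b n)
    (hstep : ∀ n, b (n + 1) ≤ b n + C * (ε n * b n)) : Tendsto b atTop (𝓝 0) := by
  obtain ⟨ℓ, hℓ⟩ := exists_tendsto_of_le_add_of_summable ⟨0, by rintro _ ⟨n, rfl⟩; exact hb n⟩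
    (hsum.mul_left C) hstep
  obtain rfl : ℓ = 0 :=
    le_antisymm (nonpos_of_tendsto_of_summable_mul hℓ hε hε_div hsum) (ge_of_tendsto' hℓ hb)
  exact hℓ

end Sequences

theorem gd_diminishing_rate_gradient_tendsto_zero_general
    {Dθ : ℕ} (L : EuclideanSpace ℝ (Fin Dθ) → ℝ)
    (hdiff : Differentiable ℝ L) (hnonneg : ∀ θ, 0 ≤ L θ)
    (Lc : ℝ) (hLc : 0 ≤ Lc)
    (hlip : ∀ θ θ', ‖gradient L θ - gradient L θ'‖ ≤ Lc * ‖θ - θ'‖)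
    (θ g : ℕ → EuclideanSpace ℝ (Fin Dθ)) (ε : ℕ → ℝ)
    (cl cu : ℝ) (hcl : 0 < cl)
    (hA1 : ∀ r, cl * ‖gradient L (θ r)‖ ^ 2 ≤ (inner ℝ (gradient L (θ r)) (g r) : ℝ))
    (hA2 : ∀ r, ‖g r‖ ^ 2 ≤ cu * ‖gradient L (θ r)‖ ^ 2)
    (hupd : ∀ r, θ (r + 1) = θ r - ε r • g r)
    (hεpos : ∀ r, 0 ≤ ε r)
    (hε0 : Tendsto ε atTop (nhds 0))
    (hεsum : Tendsto (fun n => ∑ r ∈ Finset.range n, ε r) atTop atTop) :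
    Tendsto (fun r => gradient L (θ r)) atTop (nhds 0) := by
  set b : ℕ → ℝ := fun r => ‖gradient L (θ r)‖ ^ 2
  have hsmall : ∀ᶠ r in atTop, Lc * cu * ε r ≤ cl := by
    have : Tendsto (fun r => Lc * cu * ε r) atTop (𝓝 0) := by
      simpa using hε0.const_mul (Lc * cu)
    exact this.eventually (eventually_le_nhds hcl)
  have hdecrease : ∀ᶠ r in atTop, L (θ (r + 1)) + cl / 2 * (ε r * b r) ≤ L (θ r) := by
    filter_upwards [hsmall] with r hr
    have := apply_sub_smul_le_sub hdiff hLc hlip (hA1 r) (hA2 r) (hεpos r) hr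
    rw [hupd]; linarith
  have hsum : Summable fun r => ε r * b r :=
    (summable_mul_left_iff (half_pos hcl).ne').1 <|
      summable_of_eventually_add_le (f := fun r => L (θ r))
        ⟨0, by rintro _ ⟨r, rfl⟩; exact hnonneg _⟩ (fun r => by have := hεpos r; positivity)
        hdecrease
  have hε_div : ¬ Summable ε := fun h =>
    not_tendsto_atTop_of_tendsto_nhds h.hasSum.tendsto_sum_nat hεsum
  obtain ⟨M, hM⟩ := hε0.bddAbove_range
  have hgrowth : ∀ r, b (r + 1) ≤ b r + Lc * (1 + cu + Lc * M * cu) * (ε r * b r) := fun r => by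
    simp only [b, hupd]
    exact norm_gradient_sub_smul_sq_le hLc hlip (hA2 r) (hεpos r) (hM ⟨r, rfl⟩)
  have hb := tendsto_zero_of_le_add_mul_of_summable_mul (fun r => by positivity) hεpos hε_div
    hsum hgrowth
  rw [tendsto_zero_iff_norm_tendsto_zero]
  simpa [b, Real.sqrt_sq (norm_nonneg _)] using hb.sqrt

/-- Under Assumption A, with `∇L` Lipschitz and `L` nonnegative, if the
learning rates satisfy `εᵣ → 0` and `Σᵣ εᵣ = ∞`, then the iterates
`θ_{r+1} = θᵣ − εᵣ ḡᵣ` satisfy `∇L(θᵣ) → 0`. -/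
theorem gd_diminishing_rate_gradient_tendsto_zero
    {Dθ : ℕ} (L : EuclideanSpace ℝ (Fin Dθ) → ℝ)
    (hdiff : Differentiable ℝ L) (hnonneg : ∀ θ, 0 ≤ L θ)
    (Lc : ℝ) (hLc : 0 ≤ Lc)
    (hlip : ∀ θ θ', ‖gradient L θ - gradient L θ'‖ ≤ Lc * ‖θ - θ'‖)
    (θ g : ℕ → EuclideanSpace ℝ (Fin Dθ)) (ε : ℕ → ℝ)
    (cl cu : ℝ) (hcl : 0 < cl) (hcu : 0 < cu)
    (hA1 : ∀ r, cl * ‖gradient L (θ r)‖ ^ 2 ≤ (inner ℝ (gradient L (θ r)) (g r) : ℝ))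
    (hA2 : ∀ r, ‖g r‖ ^ 2 ≤ cu * ‖gradient L (θ r)‖ ^ 2)
    (hupd : ∀ r, θ (r + 1) = θ r - ε r • g r)
    (hεpos : ∀ r, 0 ≤ ε r)
    (hε0 : Tendsto ε atTop (nhds 0))
    (hεsum : Tendsto (fun n => ∑ r ∈ Finset.range n, ε r) atTop atTop) :
    Tendsto (fun r => gradient L (θ r)) atTop (nhds 0) :=
  gd_diminishing_rate_gradient_tendsto_zero_general L hdiff hnonneg Lc hLc hlip θ g ε cl cu hcl hA1
    hA2 hupd hεpos hε0 hεsum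
end
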